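/- arXiv:2407.19501 — 4 statements merged into one kernel-verified Lean document; each statement's English description precedes it below -/
import Mathlib

section
/- Suppose d_ij < 0, d_ik < 0, and d_ji, d_jk, d_ki, d_kj > 0 are nonzero reals satisfying sinh d_ij · sinh d_jk · sinh d_ki = sinh d_ji · sinh d_kj · sinh d_ik. Then the determinant of Q₂ = [[0, coth d_jk, coth d_kj],[coth d_ik, 0, coth d_ki],[coth d_ij, coth d_ji, 0]] satisfies det Q₂ = (cosh d_jk cosh d_ki cosh d_ij + cosh d_kj cosh d_ik cosh d_ji)/(sinh d_ij sinh d_jk sinh d_ki) < 0. -/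
/-!
Expanding along the zero diagonal, `det Q₂` is the sum of two triple products of `coth`; the
compatibility condition gives them the common denominator `sinh d_ij sinh d_jk sinh d_ki`. The
numerator is a sum of products of `cosh`, hence positive, and the denominator is negative because
exactly one of `d_ij, d_jk, d_ki` is negative.
-/

open Real

noncomputable def coth (x : ℝ) : ℝ := Real.cosh x / Real.sinh x

theorem Matrix.det_fin_three_of_diag_eq_zero {R : Type*} [CommRing R] (a b c d e f : R) :
    !![0, a, b; c, 0, d; e, f, 0].det = a * d * e + b * c * f := by
  simp [Matrix.det_fin_three]

theorem coth_mul_coth_mul_coth (x y z : ℝ) :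
    coth x * coth y * coth z = cosh x * cosh y * cosh z / (sinh x * sinh y * sinh z) := by
  simp only [coth, div_mul_div_comm]

theorem coth_mul_coth_mul_coth_add_of_sinh_eq {x y z x' y' z' : ℝ}
    (h : sinh x * sinh y * sinh z = sinh x' * sinh y' * sinh z') :
    coth x * coth y * coth z + coth x' * coth y' * coth z'
      = (cosh x * cosh y * cosh z + cosh x' * cosh y' * cosh z') / (sinh x * sinh y * sinh z) := by
  rw [coth_mul_coth_mul_coth, coth_mul_coth_mul_coth, ← h, add_div]

theorem detQ2_mixed_neg_general (dij djk dki dji dkj dik : ℝ)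
    (h1 : dij < 0)
    (h4 : 0 < djk) (h5 : 0 < dki)
    (hcompat : Real.sinh dij * Real.sinh djk * Real.sinh dki
      = Real.sinh dji * Real.sinh dkj * Real.sinh dik) :
    (!![(0 : ℝ), coth djk, coth dkj;
        coth dik, 0, coth dki;
        coth dij, coth dji, 0]).det
      = (Real.cosh djk * Real.cosh dki * Real.cosh dij
          + Real.cosh dkj * Real.cosh dik * Real.cosh dji)
        / (Real.sinh dij * Real.sinh djk * Real.sinh dki) ∧
    (!![(0 : ℝ), coth djk, coth dkj;
        coth dik, 0, coth dki;
        coth dij, coth dji, 0]).det < 0 := by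
  have hdet : (!![(0 : ℝ), coth djk, coth dkj; coth dik, 0, coth dki; coth dij, coth dji, 0]).det
      = (cosh djk * cosh dki * cosh dij + cosh dkj * cosh dik * cosh dji)
        / (sinh dij * sinh djk * sinh dki) := by
    rw [Matrix.det_fin_three_of_diag_eq_zero]
    convert coth_mul_coth_mul_coth_add_of_sinh_eq hcompat using 1 <;> ring
  have hden : sinh dij * sinh djk * sinh dki < 0 :=
    mul_neg_of_neg_of_pos
      (mul_neg_of_neg_of_pos (sinh_neg_iff.mpr h1) (sinh_pos_iff.mpr h4)) (sinh_pos_iff.mpr h5)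
  exact ⟨hdet, hdet ▸ div_neg_of_pos_of_neg (by positivity) hden⟩

/-- Under the compatibility condition with `d_ij, d_ik < 0` and the other `d`'s positive,
`det Q₂ = (cosh d_jk cosh d_ki cosh d_ij + cosh d_kj cosh d_ik cosh d_ji)
  /(sinh d_ij sinh d_jk sinh d_ki) < 0`. -/
theorem detQ2_mixed_neg (dij djk dki dji dkj dik : ℝ)
    (h1 : dij < 0) (h2 : dik < 0)
    (h3 : 0 < dji) (h4 : 0 < djk) (h5 : 0 < dki) (h6 : 0 < dkj)
    (hcompat : Real.sinh dij * Real.sinh djk * Real.sinh dki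
      = Real.sinh dji * Real.sinh dkj * Real.sinh dik) :
    (!![(0 : ℝ), coth djk, coth dkj;
        coth dik, 0, coth dki;
        coth dij, coth dji, 0]).det
      = (Real.cosh djk * Real.cosh dki * Real.cosh dij
          + Real.cosh dkj * Real.cosh dik * Real.cosh dji)
        / (Real.sinh dij * Real.sinh djk * Real.sinh dki) ∧
    (!![(0 : ℝ), coth djk, coth dkj;
        coth dik, 0, coth dki;
        coth dij, coth dji, 0]).det < 0 :=
  detQ2_mixed_neg_general dij djk dki dji dkj dik h1 h4 h5 hcompat
end

section
/- Let f_i, f_j, f_k be reals and η_{ij}, η_{ik}, η_{jk} > 0. Define cosh l_{rs} = -cosh(f_r - f_s) + η_{rs} e^{f_r + f_s}, assumed > 1 for all pairs {r,s} ⊂ {i,j,k}, and let θ_i = arccosh((cosh l_{jk} + cosh l_{ij} cosh l_{ik})/(sinh l_{ij} sinh l_{ik})). Then along any sequence with f_i → +∞ and f_j, f_k → +∞, one has θ_i → 0. -/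
/-!
Write `a, b, c` for the hyperbolic cosines of the edge lengths `lᵢⱼ, lᵢₖ, lⱼₖ`. Each of them is
asymptotic to `η e^{f_r + f_s}`, so `a, b → ∞` while `c / (a b)` is of order `e^{-2 fᵢ} → 0`.
Hence `cosh θᵢ = (c + a b) / (√(a² - 1) √(b² - 1)) → 1`, and `θᵢ → 0` by continuity of `arcosh`.
-/

open Real Filter

noncomputable def arcosh (x : ℝ) : ℝ := Real.log (x + Real.sqrt (x ^ 2 - 1))

open Topology

lemma arcosh_eq_real_arcosh : _root_.arcosh = Real.arcosh := rfl

lemma Real.continuousAt_arcosh {x : ℝ} (hx : 0 < x) : ContinuousAt Real.arcosh x :=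
  ((continuous_id.add (continuous_sqrt.comp (by fun_prop))).continuousAt).log
    (add_pos_of_pos_of_nonneg hx (sqrt_nonneg _)).ne'

lemma tendsto_div_sqrt_sq_sub_one_atTop :
    Tendsto (fun x : ℝ => x / √(x ^ 2 - 1)) atTop (𝓝 1) := by
  have h : Tendsto (fun x : ℝ => (√(1 - (x ^ 2)⁻¹))⁻¹) atTop (𝓝 (√(1 - 0))⁻¹) :=
    ((tendsto_const_nhds.sub (tendsto_pow_atTop two_ne_zero).inv_tendsto_atTop).sqrt).inv₀
      (by simp)
  rw [sub_zero, sqrt_one, inv_one] at h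
  refine h.congr' ?_
  filter_upwards [eventually_gt_atTop 0] with x hx
  have hsub : 1 - (x ^ 2)⁻¹ = (x ^ 2 - 1) / x ^ 2 := by field_simp
  rw [hsub, sqrt_div' _ (by positivity), sqrt_sq hx.le, inv_div]

section Asymptotics

variable {α : Type*} {l : Filter α}

lemma tendsto_hexagon_cosh_angle {a b c : α → ℝ} (ha : Tendsto a l atTop)
    (hb : Tendsto b l atTop) (hc : Tendsto (fun n => c n / (a n * b n)) l (𝓝 0)) :
    Tendsto (fun n => (c n + a n * b n) / (√(a n ^ 2 - 1) * √(b n ^ 2 - 1))) l (𝓝 1) := by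
  have hlim := ((hc.add_const 1).mul (tendsto_div_sqrt_sq_sub_one_atTop.comp ha)).mul
    (tendsto_div_sqrt_sq_sub_one_atTop.comp hb)
  rw [zero_add, one_mul, one_mul] at hlim
  refine hlim.congr' ?_
  filter_upwards [ha.eventually_gt_atTop 1, hb.eventually_gt_atTop 1] with n han hbn
  have hsa : 0 < √(a n ^ 2 - 1) := sqrt_pos.2 (by nlinarith)
  have hsb : 0 < √(b n ^ 2 - 1) := sqrt_pos.2 (by nlinarith)
  simp only [Function.comp_apply]
  field_simp

/-- `cosh l_{rs}` for the weight `η = η_{rs}` and the conformal factors `x = f_r`, `y = f_s`. -/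
noncomputable def edgeCosh (η x y : ℝ) : ℝ := -cosh (x - y) + η * exp (x + y)

lemma edgeCosh_mul_exp_neg (η x y : ℝ) :
    edgeCosh η x y * exp (-(x + y)) = η - (exp (-(2 * y)) + exp (-(2 * x))) / 2 := by
  simp only [edgeCosh, cosh_eq, add_mul, div_mul_eq_mul_div, neg_mul, mul_assoc, ← exp_add]
  ring_nf
  rw [exp_zero, mul_one]

variable {f g h : α → ℝ}

lemma tendsto_edgeCosh_mul_exp_neg (η : ℝ) (hf : Tendsto f l atTop) (hg : Tendsto g l atTop) :
    Tendsto (fun n => edgeCosh η (f n) (g n) * exp (-(f n + g n))) l (𝓝 η) := by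
  have hexp {u : α → ℝ} (hu : Tendsto u l atTop) : Tendsto (fun n => exp (-(2 * u n))) l (𝓝 0) :=
    tendsto_exp_neg_atTop_nhds_zero.comp (hu.const_mul_atTop two_pos)
  have hlim := tendsto_const_nhds (x := η) |>.sub (((hexp hg).add (hexp hf)).div_const 2)
  rw [add_zero, zero_div, sub_zero] at hlim
  simpa only [edgeCosh_mul_exp_neg] using hlim

lemma tendsto_edgeCosh_atTop {η : ℝ} (hη : 0 < η) (hf : Tendsto f l atTop)
    (hg : Tendsto g l atTop) : Tendsto (fun n => edgeCosh η (f n) (g n)) l atTop := by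
  refine ((tendsto_edgeCosh_mul_exp_neg η hf hg).pos_mul_atTop hη
    (tendsto_exp_atTop.comp (hf.atTop_add_atTop hg))).congr fun n => ?_
  simp only [Function.comp_apply, mul_assoc, ← exp_add, neg_add_cancel, exp_zero, mul_one]

lemma tendsto_edgeCosh_div_edgeCosh_mul_edgeCosh {ηfg ηfh : ℝ} (ηgh : ℝ) (hfg : 0 < ηfg)
    (hfh : 0 < ηfh) (hf : Tendsto f l atTop) (hg : Tendsto g l atTop) (hh : Tendsto h l atTop) :
    Tendsto (fun n => edgeCosh ηgh (g n) (h n) /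
      (edgeCosh ηfg (f n) (g n) * edgeCosh ηfh (f n) (h n))) l (𝓝 0) := by
  have hdecay : Tendsto (fun n => exp (-f n) ^ 2) l (𝓝 0) := by
    simpa using (tendsto_exp_neg_atTop_nhds_zero.comp hf).pow 2
  have hlim := ((tendsto_edgeCosh_mul_exp_neg ηgh hg hh).div
    ((tendsto_edgeCosh_mul_exp_neg ηfg hf hg).mul (tendsto_edgeCosh_mul_exp_neg ηfh hf hh))
    (mul_pos hfg hfh).ne').mul hdecay
  rw [mul_zero] at hlim
  refine hlim.congr fun n => ?_
  -- the weights `e^{-(f_r + f_s)}` cancel against `e^{-2f}`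
  simp only [Pi.div_apply, neg_add, exp_add]
  field_simp

end Asymptotics

theorem angle_tendsto_zero_A3_general (ηij ηik ηjk : ℝ)
    (hηij : 0 < ηij) (hηik : 0 < ηik) (hηjk : 0 < ηjk)
    (fi fj fk : ℕ → ℝ)
    (hfi : Tendsto fi atTop atTop) (hfj : Tendsto fj atTop atTop)
    (hfk : Tendsto fk atTop atTop)
    (lij : ℕ → ℝ) (lik : ℕ → ℝ) (ljk : ℕ → ℝ)
    (hlij : ∀ n, lij n = _root_.arcosh (-Real.cosh (fi n - fj n) + ηij * Real.exp (fi n + fj n)))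
    (hlik : ∀ n, lik n = _root_.arcosh (-Real.cosh (fi n - fk n) + ηik * Real.exp (fi n + fk n)))
    (hljk : ∀ n, ljk n = _root_.arcosh (-Real.cosh (fj n - fk n) + ηjk * Real.exp (fj n + fk n)))
    (θi : ℕ → ℝ)
    (hθi : ∀ n, θi n = _root_.arcosh ((Real.cosh (ljk n)
      + Real.cosh (lij n) * Real.cosh (lik n))
      / (Real.sinh (lij n) * Real.sinh (lik n)))) :
    Tendsto θi atTop (nhds 0) := by
  have hij := tendsto_edgeCosh_atTop hηij hfi hfj
  have hik := tendsto_edgeCosh_atTop hηik hfi hfk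
  have hjk := tendsto_edgeCosh_atTop hηjk hfj hfk
  have hcos := tendsto_hexagon_cosh_angle hij hik
    (tendsto_edgeCosh_div_edgeCosh_mul_edgeCosh ηjk hηij hηik hfi hfj hfk)
  have hθ := (Real.continuousAt_arcosh one_pos).tendsto.comp hcos
  rw [Real.arcosh_zero] at hθ
  refine hθ.congr' ?_
  filter_upwards [hij.eventually_ge_atTop 1, hik.eventually_ge_atTop 1,
    hjk.eventually_ge_atTop 1] with n hijn hikn hjkn
  rw [hθi, hlij, hlik, hljk]
  simp only [arcosh_eq_real_arcosh, Function.comp_apply]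
  erw [cosh_arcosh hijn, cosh_arcosh hikn, cosh_arcosh hjkn, sinh_arcosh hijn, sinh_arcosh hikn]

/-- For the discrete conformal structure (A3): if the discrete conformal factors
`fᵢ, fⱼ, fₖ` all tend to `+∞` (along a sequence, with the hexagon condition holding),
then the generalized angle `θᵢ` tends to `0`. -/
theorem angle_tendsto_zero_A3 (ηij ηik ηjk : ℝ)
    (hηij : 0 < ηij) (hηik : 0 < ηik) (hηjk : 0 < ηjk)
    (fi fj fk : ℕ → ℝ)
    (hfi : Tendsto fi atTop atTop) (hfj : Tendsto fj atTop atTop)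
    (hfk : Tendsto fk atTop atTop)
    (lij : ℕ → ℝ) (lik : ℕ → ℝ) (ljk : ℕ → ℝ)
    (hlij : ∀ n, lij n = _root_.arcosh (-Real.cosh (fi n - fj n) + ηij * Real.exp (fi n + fj n)))
    (hlik : ∀ n, lik n = _root_.arcosh (-Real.cosh (fi n - fk n) + ηik * Real.exp (fi n + fk n)))
    (hljk : ∀ n, ljk n = _root_.arcosh (-Real.cosh (fj n - fk n) + ηjk * Real.exp (fj n + fk n)))
    (hij : ∀ n, 1 < -Real.cosh (fi n - fj n) + ηij * Real.exp (fi n + fj n))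
    (hik : ∀ n, 1 < -Real.cosh (fi n - fk n) + ηik * Real.exp (fi n + fk n))
    (hjk : ∀ n, 1 < -Real.cosh (fj n - fk n) + ηjk * Real.exp (fj n + fk n))
    (θi : ℕ → ℝ)
    (hθi : ∀ n, θi n = _root_.arcosh ((Real.cosh (ljk n)
      + Real.cosh (lij n) * Real.cosh (lik n))
      / (Real.sinh (lij n) * Real.sinh (lik n)))) :
    Tendsto θi atTop (nhds 0) :=
  angle_tendsto_zero_A3_general ηij ηik ηjk hηij hηik hηjk fi fj fk hfi hfj hfk lij lik ljk hlij
    hlik hljk θi hθi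
end

section
/- Let α_i, α_j ∈ {0,1} with associated coordinates: if α_r = 0 then e^{f_r} = e^{u_r}, and if α_r = 1 then e^{f_r} = -1/sinh u_r with u_r < 0. Suppose cosh l_{ij} = -sqrt((1+α_i e^{2f_i})(1+α_j e^{2f_j})) + η_{ij} e^{f_i+f_j} > 1 with η_{ij} > 0. Then: if α_i = α_j = 0 this is equivalent to u_i + u_j > log(2/η_{ij}); if α_i = 0, α_j = 1 it is equivalent to u_i + u_j > log(1/η_{ij}); and if α_i = α_j = 1 it is equivalent to cosh(u_i + u_j) < η_{ij} (requiring η_{ij} > 1), i.e., u_i + u_j > -arccosh(η_{ij}) given u_i, u_j < 0. -/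
/-!
Each condition is cleared of its denominator (`η`, `sinh uⱼ < 0`, or `sinh uᵢ sinh uⱼ > 0`).
In the mixed case `cosh u - sinh u = e^{-u}` and in the case `αᵢ = αⱼ = 1` the addition formula
`cosh (x + y) = cosh x cosh y + sinh x sinh y` collapse the result to an inequality on
`e^{uᵢ + uⱼ}`, resp. `cosh (uᵢ + uⱼ)`, which `log` and `arcosh` invert monotonically.
-/

open Real

lemma lt_mul_exp_iff_log_div_lt {a η s : ℝ} (ha : 0 < a) (hη : 0 < η) :
    a < η * exp s ↔ log (a / η) < s := by
  rw [log_lt_iff_lt_exp (div_pos ha hη), div_lt_iff₀' hη]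

lemma one_lt_coth_add_mul_neg_inv_sinh_iff {u c : ℝ} (hu : u < 0) :
    1 < cosh u / sinh u + c * (-1 / sinh u) ↔ 1 < c * exp u := by
  have hs : sinh u < 0 := sinh_neg_iff.mpr hu
  have hquot : cosh u / sinh u + c * (-1 / sinh u) = (cosh u - c) / sinh u := by
    field_simp
    ring
  calc 1 < cosh u / sinh u + c * (-1 / sinh u)
      ↔ exp (-u) < c := by
        rw [hquot, lt_div_iff_of_neg hs, ← cosh_sub_sinh]
        constructor <;> intro h <;> linarith
    _ ↔ 1 < c * exp u := by
        rw [exp_neg, inv_lt_iff_one_lt_mul₀ (exp_pos u)]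

lemma one_lt_neg_coth_mul_coth_add_div_iff {x y η : ℝ} (hxy : 0 < sinh x * sinh y) :
    1 < -(cosh x / sinh x) * (cosh y / sinh y) + η * (1 / (sinh x * sinh y)) ↔
      cosh (x + y) < η := by
  have hquot : -(cosh x / sinh x) * (cosh y / sinh y) + η * (1 / (sinh x * sinh y))
      = (η - cosh x * cosh y) / (sinh x * sinh y) := by
    have hx : sinh x ≠ 0 := left_ne_zero_of_mul hxy.ne'
    have hy : sinh y ≠ 0 := right_ne_zero_of_mul hxy.ne'
    field_simp
    ring
  rw [hquot, lt_div_iff₀ hxy, one_mul, cosh_add]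
  constructor <;> intro h <;> linarith

lemma cosh_lt_iff_abs_lt_arcosh {s η : ℝ} (hη : 1 ≤ η) : cosh s < η ↔ |s| < Real.arcosh η := by
  simpa only [cosh_arcosh hη, abs_of_nonneg (arcosh_nonneg hη)] using
    cosh_lt_cosh (x := s) (y := Real.arcosh η)

/-- Description of the admissible space in the `u`-coordinates for the discrete
conformal structure (A1), for the three cases `(αᵢ,αⱼ) = (0,0), (0,1), (1,1)`:
`cosh l_ij > 1` is equivalent to a linear condition on `uᵢ + uⱼ`. -/
theorem admissible_space_A1_cases (η : ℝ) (hη : 0 < η) :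
    -- case αᵢ = αⱼ = 0 : e^{f_r} = e^{u_r}
    (∀ ui uj : ℝ,
      (1 < -1 + η * Real.exp (ui + uj) ↔ Real.log (2 / η) < ui + uj)) ∧
    -- case αᵢ = 0, αⱼ = 1 : e^{f_i} = e^{u_i}, e^{f_j} = -1/sinh uⱼ, uⱼ < 0
    (∀ ui uj : ℝ, uj < 0 →
      (1 < Real.cosh uj / Real.sinh uj + η * Real.exp ui * (-1 / Real.sinh uj) ↔
        Real.log (1 / η) < ui + uj)) ∧
    -- case αᵢ = αⱼ = 1 : e^{f_r} = -1/sinh u_r, u_r < 0, requiring η > 1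
    (1 < η → ∀ ui uj : ℝ, ui < 0 → uj < 0 →
      ((1 < -(Real.cosh ui / Real.sinh ui) * (Real.cosh uj / Real.sinh uj)
          + η * (1 / (Real.sinh ui * Real.sinh uj)) ↔
        Real.cosh (ui + uj) < η) ∧
       (Real.cosh (ui + uj) < η ↔ -_root_.arcosh η < ui + uj))) := by
  refine ⟨fun ui uj => ?_, fun ui uj huj => ?_, fun hη1 ui uj hui huj => ⟨?_, ?_⟩⟩
  · rw [← lt_mul_exp_iff_log_div_lt two_pos hη]
    constructor <;> intro h <;> linarith
  · rw [one_lt_coth_add_mul_neg_inv_sinh_iff huj, mul_assoc, ← exp_add]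
    exact lt_mul_exp_iff_log_div_lt one_pos hη
  · exact one_lt_neg_coth_mul_coth_add_div_iff
      (mul_pos_of_neg_of_neg (sinh_neg_iff.mpr hui) (sinh_neg_iff.mpr huj))
  · rw [cosh_lt_iff_abs_lt_arcosh hη1.le, abs_of_neg (by linarith)]
    -- `_root_.arcosh` unfolds to `Real.arcosh`
    exact neg_lt
end

section
/- Let A be the 3×3 matrix A = -D·Q, where D = diag(sinh l_i, sinh l_j, sinh l_k) with all l's > 0, Q = Q₁·R with Q₁ = [[-1, cosh θ_k, cosh θ_j],[cosh θ_k, -1, cosh θ_i],[cosh θ_j, cosh θ_i, -1]] for θ_i,θ_j,θ_k > 0 and R = [[0, a_{jjk}, a_{kkj}],[a_{iik}, 0, a_{kki}],[a_{iij}, a_{jji}, 0]] with all a's > 0. If additionally Q has positive determinant, then Q is positive definite (equivalently all leading principal minors of Q are positive): its (1,1) entry equals cosh θ_k a_{iik} + cosh θ_j a_{iij} > 0, and its leading 2×2 minor equals sinh²θ_k a_{iik}a_{jjk} + (cosh θ_i cosh θ_k + cosh θ_j)a_{iik}a_{jji} + (cosh θ_j cosh θ_k + cosh θ_i)a_{iij}a_{jjk}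 > 0. -/
open Real Matrix

/-- The leading principal minors of `Q = Q₁ R` are positive: the `(1,1)` entry equals
`cosh θₖ a_iik + cosh θⱼ a_iij > 0`, the leading `2×2` minor equals
`sinh²θₖ a_iik a_jjk + (cosh θᵢ cosh θₖ + cosh θⱼ) a_iik a_jji
  + (cosh θⱼ cosh θₖ + cosh θᵢ) a_iij a_jjk > 0`; with `det Q > 0` assumed, all three
leading principal minors of `Q` are positive. -/
theorem Q_leading_minors_pos (li lj lk θi θj θk aiik aiij ajjk ajji akkj akki : ℝ)
    (hli : 0 < li) (hlj : 0 < lj) (hlk : 0 < lk)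
    (hθi : 0 < θi) (hθj : 0 < θj) (hθk : 0 < θk)
    (h1 : 0 < aiik) (h2 : 0 < aiij) (h3 : 0 < ajjk) (h4 : 0 < ajji)
    (h5 : 0 < akkj) (h6 : 0 < akki)
    (Q : Matrix (Fin 3) (Fin 3) ℝ)
    (hQ : Q = (!![(-1 : ℝ), Real.cosh θk, Real.cosh θj;
                  Real.cosh θk, -1, Real.cosh θi;
                  Real.cosh θj, Real.cosh θi, -1]) *
              (!![(0 : ℝ), ajjk, akkj;
                  aiik, 0, akki;
                  aiij, ajji, 0]))
    (hdet : 0 < Q.det) :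
    Q 0 0 = Real.cosh θk * aiik + Real.cosh θj * aiij ∧
    0 < Q 0 0 ∧
    Q 0 0 * Q 1 1 - Q 0 1 * Q 1 0
      = Real.sinh θk ^ 2 * (aiik * ajjk)
        + (Real.cosh θi * Real.cosh θk + Real.cosh θj) * (aiik * ajji)
        + (Real.cosh θj * Real.cosh θk + Real.cosh θi) * (aiij * ajjk) ∧
    0 < Q 0 0 * Q 1 1 - Q 0 1 * Q 1 0 := by
  subst hQ
  have hck := Real.one_lt_cosh.mpr (ne_of_gt hθk)
  have hcj := Real.one_lt_cosh.mpr (ne_of_gt hθj)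
  have hci := Real.one_lt_cosh.mpr (ne_of_gt hθi)
  have hsk : 0 < Real.sinh θk := (by simpa using Real.sinh_lt_sinh.mpr hθk : (0:ℝ) < Real.sinh θk)
  have hid : Real.cosh θk ^ 2 - Real.sinh θk ^ 2 = 1 := Real.cosh_sq_sub_sinh_sq θk
  simp [Matrix.mul_apply, Fin.sum_univ_three]
  have hck0 : 0 < Real.cosh θk := by positivity
  have hcj0 : 0 < Real.cosh θj := by positivity
  have hci0 : 0 < Real.cosh θi := by positivity
  refine ⟨by nlinarith, by linear_combination aiik * ajjk * hid,
    by
      have key : (Real.cosh θk * aiik + Real.cosh θj * aiij) *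
            (Real.cosh θk * ajjk + Real.cosh θi * ajji) -
            (-ajjk + Real.cosh θj * ajji) * (-aiik + Real.cosh θi * aiij)
          = Real.sinh θk ^ 2 * (aiik * ajjk)
            + (Real.cosh θi * Real.cosh θk + Real.cosh θj) * (aiik * ajji)
            + (Real.cosh θj * Real.cosh θk + Real.cosh θi) * (aiij * ajjk) := by
        linear_combination aiik * ajjk * hid
      nlinarith [key, mul_pos (mul_pos hsk hsk) (mul_pos h1 h3),
        mul_pos (mul_pos hci0 hck0) (mul_pos h1 h4), mul_pos hcj0 (mul_pos h1 h4),
        mul_pos (mul_pos hcj0 hck0) (mul_pos h2 h3), mul_pos hci0 (mul_pos h2 h3)]⟩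
end
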